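/- Let W ∈ 𝕎_{τ_n} be a τ_n-block diagonalizer of 𝒜 = {A_i}_{i=1}^m with Wᵀ A_i W = diag(A_i^{(11)},…,A_i^{(tt)}), and let 𝒜_j = {A_i^{(jj)}}_{i=1}^m. Suppose dim 𝒩(𝒜_j) = 1 for all 1 ≤ j ≤ t. If ω_uniq(𝒜;W) = min_{1≤j<k≤t} σ_min(G_{jk}) > 0, then 𝒜 is uniquely τ_n-block diagonalizable. -/

import Mathlib

open Matrix BigOperators Kronecker
open scoped ENNReal

namespace JBD

/-- Index type for `τ_n`-block partitioned `n×n` matrices, where the partition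
`τ_n = (n 0, …, n (t-1))`. -/
abbrev BlkIdx {t : ℕ} (n : Fin t → ℕ) := Σ j : Fin t, Fin (n j)

variable {t : ℕ} {n : Fin t → ℕ}

/-- The `τ_n`-block diagonal part `Bdiag_{τ_n}(A)`. -/
def bdiag (A : Matrix (BlkIdx n) (BlkIdx n) ℝ) : Matrix (BlkIdx n) (BlkIdx n) ℝ :=
  fun p q => if p.1 = q.1 then A p q else 0

/-- The `τ_n`-off-block diagonal part `OffBdiag_{τ_n}(A)`. -/
def offBdiag (A : Matrix (BlkIdx n) (BlkIdx n) ℝ) : Matrix (BlkIdx n) (BlkIdx n) ℝ :=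
  A - bdiag A

/-- `A ∈ 𝔻_{τ_n}`, i.e. `A` is `τ_n`-block diagonal. -/
def IsBlockDiag (A : Matrix (BlkIdx n) (BlkIdx n) ℝ) : Prop :=
  ∀ p q : BlkIdx n, p.1 ≠ q.1 → A p q = 0

/-- `P` is a permutation matrix. -/
def IsPermMatrix {I : Type*} [DecidableEq I] [Fintype I] (P : Matrix I I ℝ) : Prop :=
  ∃ σ : Equiv.Perm I, P = σ.permMatrix ℝ

/-- `P ∈ ℙ_{τ_n}`: a `τ_n`-block diagonal preserving permutation matrix. -/
def IsBDPerm (P : Matrix (BlkIdx n) (BlkIdx n) ℝ) : Prop :=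
  IsPermMatrix P ∧
    ∀ D : Matrix (BlkIdx n) (BlkIdx n) ℝ, IsBlockDiag D → IsBlockDiag (Pᵀ * D * P)

/-- `W ∈ 𝕎_{τ_n}`: nonsingular with `Bdiag_{τ_n}(Wᵀ W) = I`. -/
def MemW (W : Matrix (BlkIdx n) (BlkIdx n) ℝ) : Prop :=
  IsUnit W ∧ bdiag (Wᵀ * W) = 1

/-- `W` is a `τ_n`-block diagonalizer of the matrix set `𝒜 = {A i}`. -/
def IsDiagonalizer {m : ℕ} (A : Fin m → Matrix (BlkIdx n) (BlkIdx n) ℝ)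
    (W : Matrix (BlkIdx n) (BlkIdx n) ℝ) : Prop :=
  IsUnit W ∧ ∀ i, IsBlockDiag (Wᵀ * A i * W)

/-- The JBDP for `𝒜` is uniquely `τ_n`-block diagonalizable. -/
def UniquelyBD {m : ℕ} (A : Fin m → Matrix (BlkIdx n) (BlkIdx n) ℝ) : Prop :=
  (∃ W, IsDiagonalizer A W) ∧
    ∀ W W', IsDiagonalizer A W → IsDiagonalizer A W' →
      ∃ D P : Matrix (BlkIdx n) (BlkIdx n) ℝ,
        IsBlockDiag D ∧ IsUnit D ∧ IsBDPerm P ∧ W' = W * D * P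

/-- The `j`-th diagonal block of a `τ_n`-partitioned matrix. -/
def dblock (A : Matrix (BlkIdx n) (BlkIdx n) ℝ) (j : Fin t) :
    Matrix (Fin (n j)) (Fin (n j)) ℝ := fun x y => A ⟨j, x⟩ ⟨j, y⟩

/-- A family `B = {B i}` of `N×N` matrices can be (further) simultaneously block
diagonalized by congruence, with respect to some partition of `N` of cardinality `≥ 2`. -/
def CanSplit {N m : ℕ} (B : Fin m → Matrix (Fin N) (Fin N) ℝ) : Prop :=
  ∃ (s : ℕ) (k : Fin s → ℕ), 2 ≤ s ∧ (∀ j, 0 < k j) ∧ (∑ j, k j) = N ∧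
    ∃ (e : Fin N ≃ BlkIdx k) (V : Matrix (Fin N) (Fin N) ℝ), IsUnit V ∧
      ∀ i, IsBlockDiag (Matrix.reindex e e (Vᵀ * B i * V))

/-- The subspace `𝒩(ℬ) = {Z : B i * Z - Zᵀ * B i = 0 for all i}`. -/
def nSubmodule {m : ℕ} {I : Type*} [Fintype I] (B : Fin m → Matrix I I ℝ) :
    Submodule ℝ (Matrix I I ℝ) where
  carrier := {Z | ∀ i, B i * Z - Zᵀ * B i = 0}
  add_mem' := by
    intro a b ha hb i
    have h1 := ha i
    have h2 := hb i
    have : (B i * a - aᵀ * B i) + (B i * b - bᵀ * B i) = 0 := by rw [h1, h2, add_zero]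
    calc B i * (a + b) - (a + b)ᵀ * B i
        = (B i * a - aᵀ * B i) + (B i * b - bᵀ * B i) := by
          rw [Matrix.mul_add, Matrix.transpose_add, Matrix.add_mul]; abel
      _ = 0 := this
  zero_mem' := by intro i; simp
  smul_mem' := by
    intro c Z hZ i
    have h := hZ i
    calc B i * (c • Z) - (c • Z)ᵀ * B i = c • (B i * Z - Zᵀ * B i) := by
          rw [Matrix.mul_smul, Matrix.transpose_smul, Matrix.smul_mul, smul_sub]
      _ = 0 := by rw [h, smul_zero]

/-- Frobenius norm. -/
noncomputable def frob {I J : Type*} [Fintype I] [Fintype J] (A : Matrix I J ℝ) : ℝ :=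
  Real.sqrt (∑ i, ∑ j, (A i j) ^ 2)

/-- Spectral norm (operator 2-norm). -/
noncomputable def spec {I : Type*} [Fintype I] [DecidableEq I] (A : Matrix I I ℝ) : ℝ :=
  ‖Matrix.toEuclideanCLM (𝕜 := ℝ) A‖

/-- Singular values of a real matrix: square roots of the eigenvalues of `Aᵀ * A`
(one for each column index). -/
noncomputable def sv {I J : Type*} [Fintype I] [Fintype J] [DecidableEq J]
    (A : Matrix I J ℝ) (k : J) : ℝ :=
  Real.sqrt ((show (Aᵀ * A).IsHermitian by
    rw [← Matrix.conjTranspose_eq_transpose_of_trivial]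
    exact Matrix.isHermitian_conjTranspose_mul_self A).eigenvalues k)

/-- The smallest singular value. -/
noncomputable def sigmaMin {I J : Type*} [Fintype I] [Fintype J] [DecidableEq J]
    (A : Matrix I J ℝ) : ℝ :=
  ⨅ k : J, sv A k

/-- The smallest nonzero singular value. -/
noncomputable def minNonzeroSV {I J : Type*} [Fintype I] [Fintype J] [DecidableEq J]
    (A : Matrix I J ℝ) : ℝ :=
  sInf {s | (∃ k, sv A k = s) ∧ s ≠ 0}

/-- The list of singular values sorted in increasing order. -/
noncomputable def svSorted {I J : Type*} [Fintype I] [Fintype J] [DecidableEq J]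
    (A : Matrix I J ℝ) : List ℝ :=
  (Finset.univ.val.map (sv A)).sort (· ≤ ·)

/-- The second smallest singular value. -/
noncomputable def secondSmallestSV {I J : Type*} [Fintype I] [Fintype J] [DecidableEq J]
    (A : Matrix I J ℝ) : ℝ :=
  (svSorted A).getD 1 0

/-- The matrix `G_{jk}` (for `j < k`), built from the diagonal blocks
`Aj i = A_i^{(jj)}` (size `a`) and `Ak i = A_i^{(kk)}` (size `b`). -/
noncomputable def Gjk {m a b : ℕ} (Aj : Fin m → Matrix (Fin a) (Fin a) ℝ)
    (Ak : Fin m → Matrix (Fin b) (Fin b) ℝ) :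
    Matrix (Fin m × ((Fin b × Fin a) ⊕ (Fin b × Fin a))) ((Fin b × Fin a) ⊕ (Fin b × Fin a)) ℝ :=
  fun r c =>
    Matrix.fromBlocks
      ((1 : Matrix (Fin b) (Fin b) ℝ) ⊗ₖ Aj r.1) ((Ak r.1)ᵀ ⊗ₖ (1 : Matrix (Fin a) (Fin a) ℝ))
      ((1 : Matrix (Fin b) (Fin b) ℝ) ⊗ₖ (Aj r.1)ᵀ) (Ak r.1 ⊗ₖ (1 : Matrix (Fin a) (Fin a) ℝ))
      r.2 c

/-- Column-major vectorization: `vecM Z (c, r) = Z r c`. -/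
def vecM {a b : ℕ} (Z : Matrix (Fin a) (Fin b) ℝ) : Fin b × Fin a → ℝ :=
  fun p => Z p.2 p.1

/-- The perfect-shuffle permutation matrix `Π_j`, satisfying
`shuffle a *ᵥ vecM Zᵀ = vecM Z`. -/
def shuffle (a : ℕ) : Matrix (Fin a × Fin a) (Fin a × Fin a) ℝ :=
  fun p q => if q = p.swap then 1 else 0

/-- The matrix `G_{jj}`, built from the diagonal blocks `Aj i = A_i^{(jj)}` (size `a`):
its `i`-th block row is `I ⊗ Aj i - ((Aj i)ᵀ ⊗ I) * Π_j`. -/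
noncomputable def Gjj {m a : ℕ} (Aj : Fin m → Matrix (Fin a) (Fin a) ℝ) :
    Matrix (Fin m × (Fin a × Fin a)) (Fin a × Fin a) ℝ :=
  fun r c =>
    ((1 : Matrix (Fin a) (Fin a) ℝ) ⊗ₖ Aj r.1
      - ((Aj r.1)ᵀ ⊗ₖ (1 : Matrix (Fin a) (Fin a) ℝ)) * shuffle a) r.2 c

/-- The matrix `M_{jk}` from Theorem 2.1, `M_{jk} = G_{jk}ᵀ G_{jk}`. -/
noncomputable def Mjk {m a b : ℕ} (Aj : Fin m → Matrix (Fin a) (Fin a) ℝ)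
    (Ak : Fin m → Matrix (Fin b) (Fin b) ℝ) :
    Matrix ((Fin b × Fin a) ⊕ (Fin b × Fin a)) ((Fin b × Fin a) ⊕ (Fin b × Fin a)) ℝ :=
  ∑ i, Matrix.fromBlocks
    ((1 : Matrix (Fin b) (Fin b) ℝ) ⊗ₖ ((Aj i)ᵀ * Aj i + Aj i * (Aj i)ᵀ))
    (Ak i ⊗ₖ Aj i + (Ak i)ᵀ ⊗ₖ (Aj i)ᵀ)
    (Ak i ⊗ₖ Aj i + (Ak i)ᵀ ⊗ₖ (Aj i)ᵀ)
    (((Ak i)ᵀ * Ak i + Ak i * (Ak i)ᵀ) ⊗ₖ (1 : Matrix (Fin a) (Fin a) ℝ))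

/-- The modulus of uniqueness `ω_uniq = min_{j<k} σ_min(G_{jk})`, in terms of the
family of diagonal blocks `Ab j i = A_i^{(jj)}`. -/
noncomputable def omegaUniq {m : ℕ}
    (Ab : ∀ j : Fin t, Fin m → Matrix (Fin (n j)) (Fin (n j)) ℝ) : ℝ :=
  ⨅ p : {p : Fin t × Fin t // p.1 < p.2}, sigmaMin (Gjk (Ab p.1.1) (Ab p.1.2))

/-- The modulus of non-divisibility `ω_rob` (`+∞` when `τ_n = (1,…,1)`), in terms of
the family of diagonal blocks `Ab j i = A_i^{(jj)}`. -/
noncomputable def omegaRob {m : ℕ}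
    (Ab : ∀ j : Fin t, Fin m → Matrix (Fin (n j)) (Fin (n j)) ℝ) : ℝ≥0∞ :=
  ⨅ (j : Fin t) (_ : 1 < n j), ENNReal.ofReal (minNonzeroSV (Gjj (Ab j)))

/-- The matrix `Γ = diag(γ_1 I_{n_1}, …, γ_t I_{n_t})`. -/
def gmat (γ : Fin t → ℝ) : Matrix (BlkIdx n) (BlkIdx n) ℝ :=
  Matrix.diagonal (fun p => γ p.1)

/-- The gap `g = min_{j ≠ k} |γ_j - γ_k|`. -/
noncomputable def gammaGap (γ : Fin t → ℝ) : ℝ :=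
  ⨅ p : {p : Fin t × Fin t // p.1 ≠ p.2}, |γ p.1.1 - γ p.1.2|

/-- The multiset of complex eigenvalues (with algebraic multiplicity) of a real
square matrix: the roots of its characteristic polynomial over `ℂ`. -/
noncomputable def eigMultiset {I : Type*} [Fintype I] [DecidableEq I]
    (Z : Matrix I I ℝ) : Multiset ℂ :=
  (Z.map (Complex.ofReal)).charpoly.roots

/-- The `j`-th block column of `P`, with its `j`-th (diagonal) block replaced by `0`:
the matrix `P̂_j`. -/
def hatColumn (P : Matrix (BlkIdx n) (BlkIdx n) ℝ) (j : Fin t) :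
    Matrix (BlkIdx n) (Fin (n j)) ℝ :=
  fun p y => if p.1 = j then 0 else P p ⟨j, y⟩

/-!
Let `V` be a second diagonalizer, `X = W⁻¹ V` and `Y = X⁻¹`, so that `Xᵀ (Wᵀ A_i W) X = Vᵀ A_i V`
with both sides block diagonal. Comparing blocks, `Z = X_{jq} Y_{qk}` and `Z' = X_{kq} Y_{qj}`
satisfy `A_i^{(jj)} Z = Z'ᵀ A_i^{(kk)}`, and the same with every `A_i` transposed. For `j ≠ k`
this says that `G_{jk}` annihilates `(vec Z, -vec Z'ᵀ)`, so `ω_uniq > 0` forces `Z = 0`; for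
`j = k` it says `Z ∈ 𝒩(𝒜_j) = ℝ I`, i.e. `X_{jq} Y_{qj} = c_{jq} I`. Then `XY = YX = I` make
`(c_{jq})_q` orthogonal idempotents summing to `1`, so block row `j` of `X` has a single nonzero
block, in some column `π j`; `π` is a permutation with `n_{π j} = n_j` (compare traces), which
means `X = D Π` with `D` block diagonal and `Π` permuting whole blocks. Two diagonalizers
`W D₁ Π₁` and `W D₂ Π₂` then differ by `Π₁⁻¹ D₁⁻¹ D₂ Π₂`, which again has this form.
-/

section Blocks

variable {R : Type*}

def blk (M : Matrix (BlkIdx n) (BlkIdx n) R) (j k : Fin t) : Matrix (Fin (n j)) (Fin (n k)) R :=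
  Matrix.of fun x y => M ⟨j, x⟩ ⟨k, y⟩

@[simp]
lemma blk_apply (M : Matrix (BlkIdx n) (BlkIdx n) R) (j k : Fin t) (x : Fin (n j))
    (y : Fin (n k)) : blk M j k x y = M ⟨j, x⟩ ⟨k, y⟩ := rfl

lemma blk_transpose (M : Matrix (BlkIdx n) (BlkIdx n) R) (j k : Fin t) :
    blk Mᵀ j k = (blk M k j)ᵀ := rfl

lemma blk_mul [NonUnitalNonAssocSemiring R] (M N : Matrix (BlkIdx n) (BlkIdx n) R)
    (j k : Fin t) : blk (M * N) j k = ∑ q, blk M j q * blk N q k := by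
  ext x y
  simp only [blk_apply, mul_apply, Matrix.sum_apply, ← Finset.univ_sigma_univ, Finset.sum_sigma]

lemma blk_one_self [Zero R] [One R] (j : Fin t) :
    blk (1 : Matrix (BlkIdx n) (BlkIdx n) R) j j = 1 := by
  ext x y
  simp [one_apply]

lemma blk_one_of_ne [Zero R] [One R] {j k : Fin t} (h : j ≠ k) :
    blk (1 : Matrix (BlkIdx n) (BlkIdx n) R) j k = 0 := by
  ext x y
  simp [h]

end Blocks

section PermMatrix

variable {I R : Type*} [Fintype I] [DecidableEq I]

lemma permMatrix_transpose_mul_mul_permMatrix [NonAssocSemiring R] (σ : Equiv.Perm I)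
    (M : Matrix I I R) : (σ.permMatrix R)ᵀ * M * σ.permMatrix R = M.submatrix ⇑σ⁻¹ ⇑σ⁻¹ := by
  rw [transpose_permMatrix, PEquiv.toMatrix_toPEquiv_mul, PEquiv.mul_toMatrix_toPEquiv]
  rfl

lemma inv_permMatrix [CommRing R] (σ : Equiv.Perm I) :
    (σ.permMatrix R)⁻¹ = σ⁻¹.permMatrix R :=
  inv_eq_left_inv (by rw [← permMatrix_mul, mul_inv_cancel, permMatrix_one])

end PermMatrix

section BlockDiag

lemma isBlockDiag_iff_blockTriangular {D : Matrix (BlkIdx n) (BlkIdx n) ℝ} :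
    IsBlockDiag D ↔
      D.BlockTriangular Sigma.fst ∧ D.BlockTriangular (OrderDual.toDual ∘ Sigma.fst) :=
  ⟨fun h => ⟨fun _ _ hlt => h _ _ hlt.ne',
      fun _ _ hlt => h _ _ (OrderDual.toDual_lt_toDual.mp hlt).ne⟩,
    fun ⟨h₁, h₂⟩ _ _ hpq => hpq.lt_or_gt.elim (fun hlt => h₂ hlt) (fun hlt => h₁ hlt)⟩

variable {D E : Matrix (BlkIdx n) (BlkIdx n) ℝ}

lemma IsBlockDiag.transpose (hD : IsBlockDiag D) : IsBlockDiag Dᵀ :=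
  fun p q h => hD q p h.symm

lemma IsBlockDiag.mul (hD : IsBlockDiag D) (hE : IsBlockDiag E) : IsBlockDiag (D * E) := by
  rw [isBlockDiag_iff_blockTriangular] at *
  exact ⟨hD.1.mul hE.1, hD.2.mul hE.2⟩

lemma IsBlockDiag.inv (hD : IsBlockDiag D) : IsBlockDiag D⁻¹ := by
  by_cases hdet : IsUnit D.det
  · have := D.invertibleOfIsUnitDet hdet
    rw [isBlockDiag_iff_blockTriangular] at *
    exact ⟨blockTriangular_inv_of_blockTriangular hD.1, blockTriangular_inv_of_blockTriangular hD.2⟩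
  · rw [nonsing_inv_apply_not_isUnit _ hdet]
    exact fun _ _ _ => rfl

lemma IsBlockDiag.blk_eq_zero (hD : IsBlockDiag D) {j k : Fin t} (h : j ≠ k) :
    blk D j k = 0 := by
  ext x y
  exact hD _ _ h

lemma IsBlockDiag.blk_mul_left (hD : IsBlockDiag D) (M : Matrix (BlkIdx n) (BlkIdx n) ℝ)
    (j k : Fin t) : blk (D * M) j k = blk D j j * blk M j k := by
  rw [blk_mul, Finset.sum_eq_single j
    (fun q _ hq => by rw [hD.blk_eq_zero hq.symm, Matrix.zero_mul]) (by simp)]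

lemma IsBlockDiag.blk_mul_right (hD : IsBlockDiag D) (M : Matrix (BlkIdx n) (BlkIdx n) ℝ)
    (j k : Fin t) : blk (M * D) j k = blk M j k * blk D k k := by
  rw [blk_mul, Finset.sum_eq_single k
    (fun q _ hq => by rw [hD.blk_eq_zero hq, Matrix.mul_zero]) (by simp)]

end BlockDiag

section BlockPerm

open Equiv

def blockPerms : Subgroup (Perm (BlkIdx n)) where
  carrier := {σ | ∃ π : Perm (Fin t), ∀ p, (σ p).1 = π p.1}
  one_mem' := ⟨1, fun _ => rfl⟩
  mul_mem' := by
    rintro σ τ ⟨π, hπ⟩ ⟨ρ, hρ⟩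
    exact ⟨π * ρ, fun p => by simp [hπ, hρ]⟩
  inv_mem' := by
    rintro σ ⟨π, hπ⟩
    refine ⟨π⁻¹, fun p => ?_⟩
    rw [Perm.eq_inv_iff_eq, ← hπ]
    simp

def blockPermOf (π : Perm (Fin t)) (h : ∀ j, n (π j) = n j) : Perm (BlkIdx n) :=
  (sigmaCongrRight fun j => finCongr (h j).symm).trans
    (sigmaCongrLeft (β := fun j => Fin (n j)) π)

lemma blockPermOf_mem (π : Perm (Fin t)) (h : ∀ j, n (π j) = n j) :
    blockPermOf π h ∈ blockPerms :=
  ⟨π, fun _ => rfl⟩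

variable {σ : Perm (BlkIdx n)} {D : Matrix (BlkIdx n) (BlkIdx n) ℝ}

lemma IsBlockDiag.submatrix (hD : IsBlockDiag D) (hσ : σ ∈ blockPerms) :
    IsBlockDiag (D.submatrix ⇑σ ⇑σ) := by
  obtain ⟨π, hπ⟩ := hσ
  intro p q hpq
  exact hD _ _ (by rw [hπ, hπ]; exact π.injective.ne hpq)

lemma isBDPerm_permMatrix (hσ : σ ∈ blockPerms) : IsBDPerm (σ.permMatrix ℝ) :=
  ⟨⟨σ, rfl⟩, fun _ hD => by
    rw [permMatrix_transpose_mul_mul_permMatrix]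
    exact hD.submatrix (inv_mem hσ)⟩

end BlockPerm

def IsBlockMonomial (M : Matrix (BlkIdx n) (BlkIdx n) ℝ) : Prop :=
  ∃ (D : Matrix (BlkIdx n) (BlkIdx n) ℝ) (σ : Equiv.Perm (BlkIdx n)),
    σ ∈ blockPerms ∧ IsBlockDiag D ∧ M = D * σ.permMatrix ℝ

namespace IsBlockMonomial

variable {M M₁ M₂ : Matrix (BlkIdx n) (BlkIdx n) ℝ}

lemma inv_mul (h₁ : IsBlockMonomial M₁) (h₂ : IsBlockMonomial M₂) :
    IsBlockMonomial (M₁⁻¹ * M₂) := by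
  obtain ⟨D₁, σ₁, hσ₁, hD₁, rfl⟩ := h₁
  obtain ⟨D₂, σ₂, hσ₂, hD₂, rfl⟩ := h₂
  refine ⟨(D₁⁻¹ * D₂).submatrix ⇑σ₁⁻¹ ⇑σ₁⁻¹, σ₂ * σ₁⁻¹, mul_mem hσ₂ (inv_mem hσ₁),
    (hD₁.inv.mul hD₂).submatrix (inv_mem hσ₁), ?_⟩
  rw [← permMatrix_transpose_mul_mul_permMatrix, Matrix.mul_inv_rev, inv_permMatrix,
    transpose_permMatrix, permMatrix_mul]
  simp only [Matrix.mul_assoc]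
  rw [← Matrix.mul_assoc (σ₁.permMatrix ℝ), ← permMatrix_mul, inv_mul_cancel, permMatrix_one,
    Matrix.one_mul]

lemma exists_eq_mul (h : IsBlockMonomial M) (hM : IsUnit M) :
    ∃ D P : Matrix (BlkIdx n) (BlkIdx n) ℝ,
      IsBlockDiag D ∧ IsUnit D ∧ IsBDPerm P ∧ M = D * P := by
  obtain ⟨D, σ, hσ, hD, rfl⟩ := h
  refine ⟨D, _, hD, ?_, isBDPerm_permMatrix hσ, rfl⟩
  rw [isUnit_iff_isUnit_det, det_mul] at hM
  exact (isUnit_iff_isUnit_det D).mpr (isUnit_of_mul_isUnit_left hM)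

end IsBlockMonomial

lemma isBlockMonomial_of_blk_eq_zero {X : Matrix (BlkIdx n) (BlkIdx n) ℝ}
    (π : Equiv.Perm (Fin t)) (hsize : ∀ j, n (π j) = n j)
    (hX : ∀ j q, q ≠ π j → blk X j q = 0) : IsBlockMonomial X := by
  set σ := blockPermOf π hsize
  refine ⟨X.submatrix id σ, σ, blockPermOf_mem π hsize, fun p q hpq => ?_, ?_⟩
  · exact congrFun (congrFun (hX p.1 (π q.1) (π.injective.ne hpq.symm)) p.2) (σ q).2
  · rw [PEquiv.mul_toMatrix_toPEquiv, submatrix_submatrix]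
    simp

section SingularValues

variable {I J : Type*} [Fintype I] [Fintype J] [DecidableEq J]

lemma sigmaMin_nonneg (G : Matrix I J ℝ) : 0 ≤ sigmaMin G :=
  Real.iInf_nonneg fun _ => Real.sqrt_nonneg _

lemma eq_zero_of_mulVec_eq_zero_of_sigmaMin_pos {G : Matrix I J ℝ} (hG : 0 < sigmaMin G)
    {v : J → ℝ} (hv : G *ᵥ v = 0) : v = 0 := by
  have hherm : (Gᵀ * G).IsHermitian := by
    rw [← conjTranspose_eq_transpose_of_trivial]
    exact isHermitian_conjTranspose_mul_self G
  have heig : ∀ k, 0 < hherm.eigenvalues k := fun k =>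
    Real.sqrt_pos.mp (hG.trans_le
      (ciInf_le ⟨0, Set.forall_mem_range.mpr fun _ => Real.sqrt_nonneg _⟩ k))
  have hdet : (Gᵀ * G).det ≠ 0 := by
    rw [hherm.det_eq_prod_eigenvalues]
    exact_mod_cast (Finset.prod_pos fun k _ => heig k).ne'
  exact eq_zero_of_mulVec_eq_zero hdet (by rw [← mulVec_mulVec, hv, mulVec_zero])

end SingularValues

section Gjk

variable {m a b : ℕ} {Aj : Fin m → Matrix (Fin a) (Fin a) ℝ}
  {Ak : Fin m → Matrix (Fin b) (Fin b) ℝ}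

lemma Gjk_mulVec_apply (Z₁ Z₂ : Matrix (Fin a) (Fin b) ℝ) (i : Fin m)
    (s : (Fin b × Fin a) ⊕ (Fin b × Fin a)) :
    (Gjk Aj Ak *ᵥ Sum.elim (vec Z₁) (vec Z₂)) (i, s) =
      Sum.elim (vec (Aj i * Z₁ + Z₂ * Ak i)) (vec ((Aj i)ᵀ * Z₁ + Z₂ * (Ak i)ᵀ)) s := by
  change (fromBlocks _ _ _ _ *ᵥ _) s = _
  rw [fromBlocks_mulVec, Sum.elim_comp_inl, Sum.elim_comp_inr, ← vec_mul_eq_mulVec,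
    ← vec_mul_eq_mulVec, kronecker_mulVec_vec, kronecker_mulVec_vec]
  simp [vec_add]

lemma eq_zero_of_sigmaMin_Gjk_pos (hG : 0 < sigmaMin (Gjk Aj Ak))
    {Z₁ Z₂ : Matrix (Fin a) (Fin b) ℝ} (h₁ : ∀ i, Aj i * Z₁ = Z₂ * Ak i)
    (h₂ : ∀ i, (Aj i)ᵀ * Z₁ = Z₂ * (Ak i)ᵀ) : Z₁ = 0 ∧ Z₂ = 0 := by
  have hker : Gjk Aj Ak *ᵥ Sum.elim (vec Z₁) (vec (-Z₂)) = 0 := by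
    ext ⟨i, s | s⟩ <;> simp [Gjk_mulVec_apply, h₁, h₂]
  have h0 := eq_zero_of_mulVec_eq_zero_of_sigmaMin_pos hG hker
  rw [← Sum.elim_zero_zero, Sum.elim_eq_iff] at h0
  simpa [vec_eq_zero_iff] using h0

end Gjk

lemma omegaUniq_le_sigmaMin {m : ℕ}
    (Ab : ∀ j : Fin t, Fin m → Matrix (Fin (n j)) (Fin (n j)) ℝ) {j k : Fin t} (hjk : j < k) :
    omegaUniq Ab ≤ sigmaMin (Gjk (Ab j) (Ab k)) :=
  ciInf_le ⟨0, Set.forall_mem_range.mpr fun _ => sigmaMin_nonneg _⟩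
    (⟨(j, k), hjk⟩ : {p : Fin t × Fin t // p.1 < p.2})

lemma exists_eq_smul_one_of_finrank_nSubmodule_eq_one {m N : ℕ} (hN : 0 < N)
    {B : Fin m → Matrix (Fin N) (Fin N) ℝ} (hdim : Module.finrank ℝ (nSubmodule B) = 1)
    {Z : Matrix (Fin N) (Fin N) ℝ} (hZ : Z ∈ nSubmodule B) : ∃ c : ℝ, Z = c • 1 := by
  have : NeZero N := ⟨hN.ne'⟩
  have hone : (1 : Matrix (Fin N) (Fin N) ℝ) ∈ nSubmodule B := fun i => by simp
  obtain ⟨c, hc⟩ := (finrank_eq_one_iff_of_nonzero' (⟨1, hone⟩ : nSubmodule B)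
    (by simp)).mp hdim ⟨Z, hZ⟩
  exact ⟨c, congrArg Subtype.val hc.symm⟩

lemma smul_one_injective {N : ℕ} (hN : 0 < N) :
    Function.Injective fun c : ℝ => c • (1 : Matrix (Fin N) (Fin N) ℝ) :=
  have : NeZero N := ⟨hN.ne'⟩
  smul_left_injective ℝ one_ne_zero

lemma exists_eq_pi_single_of_sum_eq_one {ι R : Type*} [Fintype ι] [DecidableEq ι] [Semiring R]
    [NoZeroDivisors R] [Nontrivial R] {c : ι → R} (hsum : ∑ q, c q = 1)
    (horth : ∀ q q', q ≠ q' → c q * c q' = 0) : ∃ q, c = Pi.single q 1 := by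
  obtain ⟨q, -, hq⟩ := Finset.exists_ne_zero_of_sum_ne_zero (hsum ▸ one_ne_zero)
  have hzero : ∀ q', q' ≠ q → c q' = 0 := fun q' h =>
    (mul_eq_zero.mp (horth q q' h.symm)).resolve_left hq
  refine ⟨q, funext fun q' => ?_⟩
  by_cases h : q' = q
  · subst h
    rw [Pi.single_eq_same, ← hsum, Finset.sum_eq_single q' (fun r _ hr => hzero r hr) (by simp)]
  · rw [Pi.single_eq_of_ne h, hzero q' h]

lemma blk_mul_blk_relation {B C X Y : Matrix (BlkIdx n) (BlkIdx n) ℝ} (hB : IsBlockDiag B)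
    (hC : IsBlockDiag C) (hXY : X * Y = 1) (hBC : Xᵀ * B * X = C) (j k q : Fin t) :
    blk B j j * (blk X j q * blk Y q k) = (blk X k q * blk Y q j)ᵀ * blk B k k := by
  have h₁ : B * X = Yᵀ * C := calc
    B * X = (X * Y)ᵀ * (B * X) := by rw [hXY, transpose_one, Matrix.one_mul]
    _ = Yᵀ * C := by rw [← hBC, transpose_mul]; simp only [Matrix.mul_assoc]
  have h₂ : Xᵀ * B = C * Y := calc
    Xᵀ * B = Xᵀ * B * (X * Y) := by rw [hXY, Matrix.mul_one]
    _ = C * Y := by rw [← hBC]; simp only [Matrix.mul_assoc]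
  have e₁ := congrArg (blk · j q) h₁
  have e₂ := congrArg (blk · q k) h₂
  simp only [hB.blk_mul_left, hC.blk_mul_right, hB.blk_mul_right, hC.blk_mul_left,
    blk_transpose] at e₁ e₂
  rw [← Matrix.mul_assoc, e₁, Matrix.mul_assoc, ← e₂, transpose_mul, Matrix.mul_assoc]

section Congruence

variable {m : ℕ} {B C : Fin m → Matrix (BlkIdx n) (BlkIdx n) ℝ}
  {X Y : Matrix (BlkIdx n) (BlkIdx n) ℝ}

lemma blk_mul_blk_eq_zero_of_lt (hB : ∀ i, IsBlockDiag (B i)) (hC : ∀ i, IsBlockDiag (C i))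
    (hXY : X * Y = 1) (hBC : ∀ i, Xᵀ * B i * X = C i)
    (hω : 0 < omegaUniq fun j i => dblock (B i) j) {j k : Fin t} (hjk : j < k) (q : Fin t) :
    blk X j q * blk Y q k = 0 ∧ blk X k q * blk Y q j = 0 := by
  have hBC' : ∀ i, Xᵀ * (B i)ᵀ * X = (C i)ᵀ := fun i => by
    rw [← hBC i]
    simp only [transpose_mul, transpose_transpose, Matrix.mul_assoc]
  obtain ⟨h₁, h₂⟩ := eq_zero_of_sigmaMin_Gjk_pos (hω.trans_le (omegaUniq_le_sigmaMin _ hjk))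
    (fun i => blk_mul_blk_relation (hB i) (hC i) hXY (hBC i) j k q)
    (fun i => blk_mul_blk_relation (hB i).transpose (hC i).transpose hXY (hBC' i) j k q)
  exact ⟨h₁, transpose_eq_zero.mp h₂⟩

lemma exists_blk_mul_blk_eq_smul_one (hB : ∀ i, IsBlockDiag (B i))
    (hC : ∀ i, IsBlockDiag (C i)) (hXY : X * Y = 1) (hBC : ∀ i, Xᵀ * B i * X = C i)
    {j : Fin t} (hn : 0 < n j)
    (hdim : Module.finrank ℝ (nSubmodule fun i => dblock (B i) j) = 1) (q : Fin t) :
    ∃ c : ℝ, blk X j q * blk Y q j = c • 1 :=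
  exists_eq_smul_one_of_finrank_nSubmodule_eq_one hn hdim fun i =>
    sub_eq_zero.mpr (blk_mul_blk_relation (hB i) (hC i) hXY (hBC i) j j q)

end Congruence

section BlockPattern

variable {X Y : Matrix (BlkIdx n) (BlkIdx n) ℝ} {c : Fin t → Fin t → ℝ}

lemma blk_mul_blk_mul_eq_smul (hoff : ∀ j k q, j ≠ k → blk X j q * blk Y q k = 0)
    (hc : ∀ j q, blk X j q * blk Y q j = c j q • 1) (j q q' : Fin t) :
    blk X j q * blk (Y * X) q q' = c j q • blk X j q' := by
  rw [blk_mul, Matrix.mul_sum, Finset.sum_eq_single j (fun k _ hk => by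
    rw [← Matrix.mul_assoc, hoff j k q (Ne.symm hk), Matrix.zero_mul]) (by simp),
    ← Matrix.mul_assoc, hc, Matrix.smul_mul, Matrix.one_mul]

lemma exists_perm_blk_eq_zero (hn : ∀ j, 0 < n j) (hXY : X * Y = 1) (hYX : Y * X = 1)
    (hoff : ∀ j k q, j ≠ k → blk X j q * blk Y q k = 0)
    (hc : ∀ j q, blk X j q * blk Y q j = c j q • 1) :
    ∃ π : Equiv.Perm (Fin t), (∀ j, n (π j) = n j) ∧ ∀ j q, q ≠ π j → blk X j q = 0 := by
  have hsum : ∀ j, ∑ q, c j q = 1 := fun j => smul_one_injective (hn j) <| by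
    simpa only [blk_mul, hc, blk_one_self, ← Finset.sum_smul, one_smul] using
      congrArg (blk · j j) hXY
  have horth : ∀ j q q', q ≠ q' → c j q * c j q' = 0 := fun j q q' hqq' =>
    smul_one_injective (hn j) <| by
      simpa [hYX, blk_one_of_ne hqq', Matrix.smul_mul, hc, smul_smul] using
        (congrArg (· * blk Y q' j) (blk_mul_blk_mul_eq_smul hoff hc j q q')).symm
  choose f hf using fun j => exists_eq_pi_single_of_sum_eq_one (hsum j) (horth j)
  have hzero : ∀ j q, q ≠ f j → blk X j q = 0 := fun j q hq => by
    have h := blk_mul_blk_mul_eq_smul hoff hc j q q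
    rwa [hYX, blk_one_self, Matrix.mul_one, hf j, Pi.single_eq_of_ne hq, zero_smul] at h
  have hsurj : Function.Surjective f := fun q => by
    by_contra! hq
    have h := congrArg (blk · q q) hYX
    simp only [blk_mul, hzero _ q (fun h => hq _ h.symm), Matrix.mul_zero,
      Finset.sum_const_zero, blk_one_self] at h
    have : NeZero (n q) := ⟨(hn q).ne'⟩
    exact zero_ne_one h
  have hinj := Finite.injective_iff_surjective.mpr hsurj
  refine ⟨Equiv.ofBijective f ⟨hinj, hsurj⟩, fun j => ?_, hzero⟩
  have h₁ : blk X j (f j) * blk Y (f j) j = 1 := by rw [hc, hf j, Pi.single_eq_same, one_smul]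
  have h₂ : blk Y (f j) j * blk X j (f j) = 1 := by
    rw [← blk_one_self (f j), ← hYX, blk_mul, Finset.sum_eq_single j (fun k _ hk => by
      rw [hzero k (f j) (hinj.ne hk.symm), Matrix.mul_zero]) (by simp)]
  have htr := congrArg trace h₁
  rw [trace_mul_comm, h₂, trace_one, trace_one] at htr
  show n (f j) = n j
  simpa using htr

end BlockPattern

theorem isBlockMonomial_of_congr {m : ℕ} (hn : ∀ j, 0 < n j)
    {B C : Fin m → Matrix (BlkIdx n) (BlkIdx n) ℝ} {X : Matrix (BlkIdx n) (BlkIdx n) ℝ}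
    (hB : ∀ i, IsBlockDiag (B i)) (hC : ∀ i, IsBlockDiag (C i)) (hX : IsUnit X)
    (hBC : ∀ i, Xᵀ * B i * X = C i)
    (hdim : ∀ j, Module.finrank ℝ (nSubmodule fun i => dblock (B i) j) = 1)
    (hω : 0 < omegaUniq fun j i => dblock (B i) j) : IsBlockMonomial X := by
  have hdet := (isUnit_iff_isUnit_det X).mp hX
  have hXY : X * X⁻¹ = 1 := X.mul_nonsing_inv hdet
  have hoff : ∀ j k q, j ≠ k → blk X j q * blk X⁻¹ q k = 0 := fun j k q hjk =>
    hjk.lt_or_gt.elim (fun h => (blk_mul_blk_eq_zero_of_lt hB hC hXY hBC hω h q).1)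
      (fun h => (blk_mul_blk_eq_zero_of_lt hB hC hXY hBC hω h q).2)
  choose c hc using fun j q => exists_blk_mul_blk_eq_smul_one hB hC hXY hBC (hn j) (hdim j) q
  obtain ⟨π, hsize, hzero⟩ := exists_perm_blk_eq_zero hn hXY (X.nonsing_inv_mul hdet) hoff hc
  exact isBlockMonomial_of_blk_eq_zero π hsize hzero

theorem isBlockMonomial_inv_mul_of_isDiagonalizer {m : ℕ} (hn : ∀ j, 0 < n j)
    {A : Fin m → Matrix (BlkIdx n) (BlkIdx n) ℝ} {W V : Matrix (BlkIdx n) (BlkIdx n) ℝ}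
    (hW : IsDiagonalizer A W) (hV : IsDiagonalizer A V)
    (hdim : ∀ j, Module.finrank ℝ (nSubmodule fun i => dblock (Wᵀ * A i * W) j) = 1)
    (hω : 0 < omegaUniq fun j i => dblock (Wᵀ * A i * W) j) : IsBlockMonomial (W⁻¹ * V) := by
  have hWX : W * (W⁻¹ * V) = V :=
    mul_nonsing_inv_cancel_left _ _ ((isUnit_iff_isUnit_det W).mp hW.1)
  refine isBlockMonomial_of_congr hn hW.2 hV.2 ((isUnit_nonsing_inv_iff.mpr hW.1).mul hV.1)
    (fun i => ?_) hdim hω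
  conv_rhs => rw [← hWX]
  simp only [transpose_mul, Matrix.mul_assoc]

theorem uniquelyBD_of_omegaUniq_pos_general {t m : ℕ} {n : Fin t → ℕ} (hn : ∀ j, 0 < n j)
    (A : Fin m → Matrix (BlkIdx n) (BlkIdx n) ℝ)
    (W : Matrix (BlkIdx n) (BlkIdx n) ℝ) (hW : IsDiagonalizer A W)
    (Ab : ∀ j : Fin t, Fin m → Matrix (Fin (n j)) (Fin (n j)) ℝ)
    (hAb : ∀ j i, Ab j i = dblock (Wᵀ * A i * W) j)
    (hdim : ∀ j, Module.finrank ℝ (nSubmodule (Ab j)) = 1)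
    (homega : 0 < omegaUniq Ab) :
    UniquelyBD A := by
  obtain rfl : Ab = fun j i => dblock (Wᵀ * A i * W) j := funext fun j => funext (hAb j)
  refine ⟨⟨W, hW⟩, fun W₁ W₂ h₁ h₂ => ?_⟩
  have hM := (isBlockMonomial_inv_mul_of_isDiagonalizer hn hW h₁ hdim homega).inv_mul
    (isBlockMonomial_inv_mul_of_isDiagonalizer hn hW h₂ hdim homega)
  have hWdet := (isUnit_iff_isUnit_det W).mp hW.1
  rw [Matrix.mul_inv_rev, nonsing_inv_nonsing_inv _ hWdet, Matrix.mul_assoc,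
    mul_nonsing_inv_cancel_left _ _ hWdet] at hM
  obtain ⟨D, P, hD, hDu, hP, hDP⟩ :=
    hM.exists_eq_mul ((isUnit_nonsing_inv_iff.mpr h₁.1).mul h₂.1)
  refine ⟨D, P, hD, hDu, hP, ?_⟩
  rw [Matrix.mul_assoc, ← hDP,
    mul_nonsing_inv_cancel_left _ _ ((isUnit_iff_isUnit_det W₁).mp h₁.1)]

/-- Corollary 2.4(a): if `dim 𝒩(𝒜_j) = 1` for all `j` and
`ω_uniq(𝒜;W) > 0`, then `𝒜` is uniquely `τ_n`-block diagonalizable. -/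
theorem uniquelyBD_of_omegaUniq_pos {t m : ℕ} {n : Fin t → ℕ} (hn : ∀ j, 0 < n j)
    (A : Fin m → Matrix (BlkIdx n) (BlkIdx n) ℝ)
    (W : Matrix (BlkIdx n) (BlkIdx n) ℝ) (hWmem : MemW W) (hW : IsDiagonalizer A W)
    (Ab : ∀ j : Fin t, Fin m → Matrix (Fin (n j)) (Fin (n j)) ℝ)
    (hAb : ∀ j i, Ab j i = dblock (Wᵀ * A i * W) j)
    (hdim : ∀ j, Module.finrank ℝ (nSubmodule (Ab j)) = 1)
    (homega : 0 < omegaUniq Ab) :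
    UniquelyBD A :=
  uniquelyBD_of_omegaUniq_pos_general hn A W hW Ab hAb hdim homega

end JBD
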